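/- Fix a shift matrix S and centers v_1, …, v_K such that d_{k,i} := ‖x̃_{i,s_{k,i}}|_{(0,c_k)} − v_k‖ > 0 for every i and k, and define P̂ by p̂_{k,i} = [Σ_{l=1}^K (d_{k,i}²/d_{l,i}²)^{1/(m-1)}]^{-1}. Then (P̂, S, v_1, …, v_K) is feasible, and for every feasible (P, S, v_1, …, v_K) with P ≠ P̂ one has J_m(P̂, S, v_1, …, v_K) < J_m(P, S, v_1, …, v_K); that is, P̂ is the unique minimizer of the membership matrix given the shifts and centers, and replacing any other feasible membership matrix by P̂ strictly decreases J_m. -/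

import Mathlib

/-!
For each curve `i` the objective splits into the column sums `∑ₖ pₖ^m wₖ` with `wₖ = d_{k,i}² > 0`,
to be minimised over the probability simplex. The explicit `p̂` is positive, sums to one and
satisfies the stationarity condition `p̂ₖ^(m-1) wₖ = λ` for a constant `λ`. By strict convexity of
`t ↦ t^m`, `qₖ^m ≥ p̂ₖ^m + m p̂ₖ^(m-1) (qₖ - p̂ₖ)`, strictly for `qₖ ≠ p̂ₖ`; weighting by `wₖ` and
summing, the first-order terms add up to `m λ (∑ qₖ - ∑ p̂ₖ) = 0`.
-/

open MeasureTheory Finset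

theorem Finset.sum_lt_sum_of_ne {ι α M : Type*} [Fintype ι] [AddCommMonoid M] [Preorder M]
    [IsOrderedCancelAddMonoid M] [AddLeftStrictMono M] {a b : ι → α} {f g : ι → M}
    (hle : ∀ i, f i ≤ g i) (hlt : ∀ i, a i ≠ b i → f i < g i) (hab : a ≠ b) :
    ∑ i, f i < ∑ i, g i := by
  obtain ⟨i, hi⟩ := Function.ne_iff.1 hab
  exact Finset.sum_lt_sum (fun i _ => hle i) ⟨i, mem_univ i, hlt i hi⟩

theorem tangent_lt_rpow {a b m : ℝ} (ha : 0 ≤ a) (hb : 0 < b) (hm : 1 < m) (hab : a ≠ b) :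
    b ^ m + m * b ^ (m - 1) * (a - b) < a ^ m := by
  have hbernoulli : 1 + m * (a / b - 1) < (a / b) ^ m := by
    have := one_add_mul_self_lt_rpow_one_add
      (by linarith [div_nonneg ha hb.le] : -1 ≤ a / b - 1)
      (sub_ne_zero.2 (mt (div_eq_one_iff_eq hb.ne').1 hab)) hm
    rwa [add_sub_cancel] at this
  calc b ^ m + m * b ^ (m - 1) * (a - b) = b ^ m * (1 + m * (a / b - 1)) := by
        rw [Real.rpow_sub_one hb.ne']; field_simp
    _ < b ^ m * (a / b) ^ m := mul_lt_mul_of_pos_left hbernoulli (Real.rpow_pos_of_pos hb m)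
    _ = a ^ m := by rw [Real.div_rpow ha hb.le, mul_div_cancel₀ _ (Real.rpow_pos_of_pos hb m).ne']

theorem tangent_le_rpow {a b m : ℝ} (ha : 0 ≤ a) (hb : 0 < b) (hm : 1 < m) :
    b ^ m + m * b ^ (m - 1) * (a - b) ≤ a ^ m := by
  rcases eq_or_ne a b with rfl | hab
  · simp
  · exact (tangent_lt_rpow ha hb hm hab).le

section Stationary

variable {ι : Type*} [Fintype ι] {m c : ℝ} {w p q : ι → ℝ}

theorem sum_tangent_mul_eq (hstat : ∀ k, p k ^ (m - 1) * w k = c)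
    (hsum : ∑ k, q k = ∑ k, p k) :
    ∑ k, (p k ^ m + m * p k ^ (m - 1) * (q k - p k)) * w k = ∑ k, p k ^ m * w k := by
  have hterm : ∀ k, (p k ^ m + m * p k ^ (m - 1) * (q k - p k)) * w k
      = p k ^ m * w k + m * c * (q k - p k) := fun k => by
    rw [← hstat k]; ring
  simp only [hterm, sum_add_distrib, ← mul_sum, sum_sub_distrib, hsum, sub_self, mul_zero,
    add_zero]

theorem sum_rpow_mul_le_of_stationary (hm : 1 < m) (hw : ∀ k, 0 ≤ w k) (hp : ∀ k, 0 < p k)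
    (hstat : ∀ k, p k ^ (m - 1) * w k = c) (hq : ∀ k, 0 ≤ q k)
    (hsum : ∑ k, q k = ∑ k, p k) :
    ∑ k, p k ^ m * w k ≤ ∑ k, q k ^ m * w k := by
  rw [← sum_tangent_mul_eq hstat hsum]
  exact sum_le_sum fun k _ =>
    mul_le_mul_of_nonneg_right (tangent_le_rpow (hq k) (hp k) hm) (hw k)

theorem sum_rpow_mul_lt_of_stationary (hm : 1 < m) (hw : ∀ k, 0 < w k) (hp : ∀ k, 0 < p k)
    (hstat : ∀ k, p k ^ (m - 1) * w k = c) (hq : ∀ k, 0 ≤ q k)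
    (hsum : ∑ k, q k = ∑ k, p k) (hqp : q ≠ p) :
    ∑ k, p k ^ m * w k < ∑ k, q k ^ m * w k := by
  rw [← sum_tangent_mul_eq hstat hsum]
  exact sum_lt_sum_of_ne
    (fun k => mul_le_mul_of_nonneg_right (tangent_le_rpow (hq k) (hp k) hm) (hw k).le)
    (fun k hk => mul_lt_mul_of_pos_right (tangent_lt_rpow (hq k) (hp k) hm hk) (hw k)) hqp

end Stationary

noncomputable def fuzzyMembership {ι : Type*} [Fintype ι] (m : ℝ) (w : ι → ℝ) (k : ι) : ℝ :=
  (∑ l, (w k / w l) ^ (1 / (m - 1)))⁻¹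

section FuzzyMembership

variable {ι : Type*} [Fintype ι] {m : ℝ} {w : ι → ℝ}

theorem one_le_fuzzyMembership_inv (hw : ∀ k, 0 < w k) (k : ι) :
    1 ≤ (fuzzyMembership m w k)⁻¹ := by
  rw [fuzzyMembership, inv_inv]
  calc (1 : ℝ) = (w k / w k) ^ (1 / (m - 1)) := by rw [div_self (hw k).ne', Real.one_rpow]
    _ ≤ ∑ l, (w k / w l) ^ (1 / (m - 1)) :=
      single_le_sum (f := fun l => (w k / w l) ^ (1 / (m - 1)))
        (fun l _ => Real.rpow_nonneg (div_nonneg (hw k).le (hw l).le) _) (mem_univ k)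

theorem fuzzyMembership_pos (hw : ∀ k, 0 < w k) (k : ι) : 0 < fuzzyMembership m w k :=
  inv_pos.1 (one_pos.trans_le (one_le_fuzzyMembership_inv hw k))

theorem fuzzyMembership_le_one (hw : ∀ k, 0 < w k) (k : ι) : fuzzyMembership m w k ≤ 1 :=
  inv_inv (fuzzyMembership m w k) ▸ inv_le_one_of_one_le₀ (one_le_fuzzyMembership_inv hw k)

theorem fuzzyMembership_eq_inv_rpow_div_sum (hw : ∀ k, 0 ≤ w k) (k : ι) :
    fuzzyMembership m w k = (w k ^ (1 / (m - 1)))⁻¹ / ∑ l, (w l ^ (1 / (m - 1)))⁻¹ := by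
  have hterm : ∀ l, (w k / w l) ^ (1 / (m - 1)) = w k ^ (1 / (m - 1)) * (w l ^ (1 / (m - 1)))⁻¹ :=
    fun l => by rw [Real.div_rpow (hw k) (hw l), div_eq_mul_inv]
  rw [fuzzyMembership, sum_congr rfl fun l _ => hterm l, ← mul_sum, mul_inv]
  exact (div_eq_mul_inv _ _).symm

theorem sum_fuzzyMembership [Nonempty ι] (hw : ∀ k, 0 < w k) : ∑ k, fuzzyMembership m w k = 1 := by
  simp only [fuzzyMembership_eq_inv_rpow_div_sum fun k => (hw k).le, ← sum_div]
  exact div_self (sum_pos (fun l _ => inv_pos.2 (Real.rpow_pos_of_pos (hw l) _)) univ_nonempty).ne'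

theorem fuzzyMembership_rpow_sub_one_mul (hm : 1 < m) (hw : ∀ k, 0 < w k) (k : ι) :
    fuzzyMembership m w k ^ (m - 1) * w k = ((∑ l, (w l ^ (1 / (m - 1)))⁻¹) ^ (m - 1))⁻¹ := by
  have hT : 0 ≤ ∑ l, (w l ^ (1 / (m - 1)))⁻¹ :=
    sum_nonneg fun l _ => inv_nonneg.2 (Real.rpow_nonneg (hw l).le _)
  have hwk : (w k ^ (1 / (m - 1))) ^ (m - 1) = w k := by
    rw [← Real.rpow_mul (hw k).le, one_div_mul_cancel (by linarith), Real.rpow_one]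
  rw [fuzzyMembership_eq_inv_rpow_div_sum (fun k => (hw k).le), Real.div_rpow (inv_nonneg.2
    (Real.rpow_nonneg (hw k).le _)) hT, Real.inv_rpow (Real.rpow_nonneg (hw k).le _), hwk]
  field_simp [(hw k).ne']

end FuzzyMembership

theorem probKMA_membership_update_unique_minimizer_general
    (N K d : ℕ) (hN : 1 ≤ N) (hK : 1 ≤ K) (m : ℝ) (hm : 1 < m)
    (c : Fin K → ℝ)
    (Rr : (k : Fin K) → ℝ → Fin N →
      Lp (EuclideanSpace ℝ (Fin d)) 2 (volume.restrict (Set.Ioo (0 : ℝ) (c k))))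
    (S : Fin K → Fin N → ℝ)
    (v : (k : Fin K) →
      Lp (EuclideanSpace ℝ (Fin d)) 2 (volume.restrict (Set.Ioo (0 : ℝ) (c k))))
    (hdpos : ∀ k i, 0 < ‖Rr k (S k i) i - v k‖)
    (Phat : Fin K → Fin N → ℝ)
    (hPhat : ∀ k i, Phat k i =
      (∑ l, (‖Rr k (S k i) i - v k‖ ^ 2 / ‖Rr l (S l i) i - v l‖ ^ 2) ^
        ((1 : ℝ) / (m - 1)))⁻¹) :
    ((∀ k i, Phat k i ∈ Set.Icc (0 : ℝ) 1) ∧ (∀ i, ∑ k, Phat k i = 1) ∧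
        (∀ k, 0 < ∑ i, Phat k i)) ∧
      ∀ P : Fin K → Fin N → ℝ,
        ((∀ k i, P k i ∈ Set.Icc (0 : ℝ) 1) ∧ (∀ i, ∑ k, P k i = 1) ∧
          (∀ k, 0 < ∑ i, P k i)) → P ≠ Phat →
        (∑ i, ∑ k, Phat k i ^ m * ‖Rr k (S k i) i - v k‖ ^ 2) <
          ∑ i, ∑ k, P k i ^ m * ‖Rr k (S k i) i - v k‖ ^ 2 := by
  have : Nonempty (Fin N) := Fin.pos_iff_nonempty.1 hN
  have : Nonempty (Fin K) := Fin.pos_iff_nonempty.1 hK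
  set w : Fin N → Fin K → ℝ := fun i k => ‖Rr k (S k i) i - v k‖ ^ 2
  have hw : ∀ i k, 0 < w i k := fun i k => pow_pos (hdpos k i) 2
  have hcol : ∀ k i, Phat k i = fuzzyMembership m (w i) k := hPhat
  have hstat := fun i => fuzzyMembership_rpow_sub_one_mul hm (hw i)
  simp only [hcol]
  refine ⟨⟨fun k i => ⟨(fuzzyMembership_pos (hw i) k).le, fuzzyMembership_le_one (hw i) k⟩,
    fun i => sum_fuzzyMembership (hw i),
    fun k => sum_pos (fun i _ => fuzzyMembership_pos (hw i) k) univ_nonempty⟩, ?_⟩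
  rintro P ⟨hP, hPsum, -⟩ hne
  have hsum : ∀ i, ∑ k, P k i = ∑ k, fuzzyMembership m (w i) k := fun i => by
    rw [hPsum, sum_fuzzyMembership (hw i)]
  refine sum_lt_sum_of_ne (a := fun i k => P k i) (b := fun i => fuzzyMembership m (w i))
    (fun i => sum_rpow_mul_le_of_stationary hm (fun k => (hw i k).le)
      (fuzzyMembership_pos (hw i)) (hstat i) (fun k => (hP k i).1) (hsum i))
    (fun i hi => sum_rpow_mul_lt_of_stationary hm (hw i) (fuzzyMembership_pos (hw i)) (hstat i)
      (fun k => (hP k i).1) (hsum i) hi) fun h => hne ?_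
  ext k i
  exact (congrFun (congrFun h i) k).trans (hcol k i).symm

/-- Given shifts `S` and centers `v` with all distances
`d_{k,i} = ‖x̃_{i,s_{k,i}}|_{(0,c_k)} − v_k‖ > 0`, the membership matrix `P̂` defined by
the explicit formula is feasible and is the unique minimizer of `J_m(·, S, v)` over
feasible membership matrices: for every feasible `P ≠ P̂`,
`J_m(P̂,S,v) < J_m(P,S,v)`. Here `Rr k s i ∈ L²((0,c_k), ℝ^d)` denotes the restriction
to `(0,c_k)` of the shifted curve `t ↦ x_i(t+s)`. -/
theorem probKMA_membership_update_unique_minimizer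
    (N K d : ℕ) (hN : 1 ≤ N) (hK : 1 ≤ K) (hd : 1 ≤ d) (m : ℝ) (hm : 1 < m)
    (x : Fin N → Lp (EuclideanSpace ℝ (Fin d)) 2 (volume : Measure ℝ))
    (c : Fin K → ℝ) (hc : ∀ k, 0 < c k)
    (Rr : (k : Fin K) → ℝ → Fin N →
      Lp (EuclideanSpace ℝ (Fin d)) 2 (volume.restrict (Set.Ioo (0 : ℝ) (c k))))
    (hRr : ∀ k s i, ⇑(Rr k s i) =ᵐ[volume.restrict (Set.Ioo (0 : ℝ) (c k))]
      fun t => x i (t + s))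
    (S : Fin K → Fin N → ℝ)
    (v : (k : Fin K) →
      Lp (EuclideanSpace ℝ (Fin d)) 2 (volume.restrict (Set.Ioo (0 : ℝ) (c k))))
    (hdpos : ∀ k i, 0 < ‖Rr k (S k i) i - v k‖)
    (Phat : Fin K → Fin N → ℝ)
    (hPhat : ∀ k i, Phat k i =
      (∑ l, (‖Rr k (S k i) i - v k‖ ^ 2 / ‖Rr l (S l i) i - v l‖ ^ 2) ^
        ((1 : ℝ) / (m - 1)))⁻¹) :
    ((∀ k i, Phat k i ∈ Set.Icc (0 : ℝ) 1) ∧ (∀ i, ∑ k, Phat k i = 1) ∧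
        (∀ k, 0 < ∑ i, Phat k i)) ∧
      ∀ P : Fin K → Fin N → ℝ,
        ((∀ k i, P k i ∈ Set.Icc (0 : ℝ) 1) ∧ (∀ i, ∑ k, P k i = 1) ∧
          (∀ k, 0 < ∑ i, P k i)) → P ≠ Phat →
        (∑ i, ∑ k, Phat k i ^ m * ‖Rr k (S k i) i - v k‖ ^ 2) <
          ∑ i, ∑ k, P k i ^ m * ‖Rr k (S k i) i - v k‖ ^ 2 :=
  probKMA_membership_update_unique_minimizer_general N K d hN hK m hm c Rr S v hdpos Phat hPhat
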